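/- Let M be a loopless matroid with real weights x : E → ℝ, let B be an x-optimal basis (of minimum total weight), and let e ∈ B. Then x(e) ≤ μ_e(x), where μ_e(x) is the min-max weight of e, defined as the minimum over all circuits C containing e of the maximum weight of an element in C - e. -/

import Mathlib

open Matroid Set

variable {α : Type*}

/-- A circuit of a matroid: a minimal dependent set. -/
def Matroid.IsCircuit' (M : Matroid α) (C : Set α) : Prop :=
  M.Dep C ∧ ∀ ⦃D⦄, D ⊂ C → M.Indep D

/-- Looplessness in the sense of the paper: no element is a loop
(every singleton of the ground set is independent) and no element is a
coloop (no element lies in all bases). -/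
def Matroid.PaperLoopless (M : Matroid α) : Prop :=
  ∀ e ∈ M.E, M.Indep {e} ∧ ∃ B, M.IsBase B ∧ e ∉ B

/-- The weight `x(B)` of a set of ground elements. -/
noncomputable def setWeight (x : α → ℝ) (B : Set α) : ℝ := ∑ᶠ e ∈ B, x e

/-- The min-max weight `μ_e(x)`: the minimum over circuits `C` containing `e`
of the maximum weight of an element of `C - e`. -/
noncomputable def muWeight (M : Matroid α) (x : α → ℝ) (e : α) : ℝ :=
  sInf {w | ∃ C, M.IsCircuit' C ∧ e ∈ C ∧ w = sSup (x '' (C \ {e}))}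

/-- The bottleneck weight `b_e(x) = min {x(e), μ_e(x)}`. -/
noncomputable def bottleneck (M : Matroid α) (x : α → ℝ) (e : α) : ℝ :=
  min (x e) (muWeight M x e)

/-- The minimum weight of a basis of `M`. -/
noncomputable def mwb (M : Matroid α) (x : α → ℝ) : ℝ :=
  sInf {w | ∃ B, M.IsBase B ∧ w = setWeight x B}

/-- `B` is an `x`-optimal basis of `M`. -/
def IsOptimalBase (M : Matroid α) (x : α → ℝ) (B : Set α) : Prop :=
  M.IsBase B ∧ ∀ B', M.IsBase B' → setWeight x B ≤ setWeight x B'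

/-- Deletion of a single element. -/
noncomputable def Matroid.del (M : Matroid α) (e : α) : Matroid α :=
  M ↾ (M.E \ {e})

/-- Contraction of a single element, defined by duality: `M/e = (M✶ \ e)✶`. -/
noncomputable def Matroid.con (M : Matroid α) (e : α) : Matroid α :=
  ((M✶ ↾ (M.E \ {e}))✶)

/-! An exchange argument: if `e ∈ B` had larger weight than every other element of a circuit
`C ∋ e`, then some `f ∈ C - e` could replace `e` in `B`, since `C - e` spans `e` while `B - e` does
not; the resulting basis would be strictly lighter than `B`. -/

namespace Matroid

variable {M : Matroid α} {B C : Set α} {e : α}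

lemma isCircuit'_iff_isCircuit : M.IsCircuit' C ↔ M.IsCircuit C :=
  isCircuit_iff_forall_ssubset.symm

lemma IsBase.exists_exchange_of_isCircuit (hB : M.IsBase B) (heB : e ∈ B) (hC : M.IsCircuit C)
    (heC : e ∈ C) : ∃ f ∈ C \ {e}, f ∉ B ∧ M.IsBase (insert f (B \ {e})) := by
  by_contra! h
  have hspan : C \ {e} ⊆ M.closure (B \ {e}) := by
    intro f hf
    by_contra hcl
    have hfB : f ∉ B := fun hfB ↦ hcl (M.subset_closure _ (sdiff_subset.trans hB.subset_ground)
      ⟨hfB, hf.2⟩)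
    exact h f hf hfB (hB.exchange_base_of_notMem_closure heB hcl (hC.subset_ground hf.1))
  exact hB.indep.notMem_closure_sdiff_of_mem heB <|
    M.closure_subset_closure_of_subset_closure hspan (hC.mem_closure_sdiff_singleton_of_mem heC)

end Matroid

lemma setWeight_insert_sdiff_singleton (x : α → ℝ) {B : Set α} {e f : α} (hB : B.Finite)
    (heB : e ∈ B) (hfB : f ∉ B) :
    setWeight x (insert f (B \ {e})) = setWeight x B - x e + x f := by
  have hB' : (B \ {e}).Finite := hB.subset sdiff_subset
  have hsplit : setWeight x B = x e + setWeight x (B \ {e}) := by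
    rw [setWeight, setWeight, ← finsum_mem_insert x (fun h ↦ h.2 rfl) hB',
      insert_sdiff_singleton, insert_eq_of_mem heB]
  rw [hsplit, setWeight, finsum_mem_insert x (fun h ↦ hfB h.1) hB', setWeight]
  ring

namespace IsOptimalBase

variable {M : Matroid α} [M.RankFinite] {x : α → ℝ} {B : Set α} {e : α}

lemma le_of_exchange (hB : IsOptimalBase M x B) (heB : e ∈ B) {f : α} (hfB : f ∉ B)
    (hB' : M.IsBase (insert f (B \ {e}))) : x e ≤ x f := by
  have := hB.2 _ hB'
  rw [setWeight_insert_sdiff_singleton x hB.1.finite heB hfB] at this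
  linarith

lemma le_sSup_image_of_isCircuit (hB : IsOptimalBase M x B) (heB : e ∈ B) {C : Set α}
    (hC : M.IsCircuit C) (heC : e ∈ C) : x e ≤ sSup (x '' (C \ {e})) := by
  obtain ⟨f, hfC, hfB, hB'⟩ := hB.1.exists_exchange_of_isCircuit heB hC heC
  have hCe : (C \ {e}).Finite := (hC.sdiff_singleton_indep heC).finite
  exact (hB.le_of_exchange heB hfB hB').trans (le_csSup (hCe.image x).bddAbove ⟨f, hfC, rfl⟩)

end IsOptimalBase

/-- for an optimal basis `B` and `e ∈ B`, `x(e) ≤ μ_e(x)`. -/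
theorem stmt4 (M : Matroid α) [M.Finite] (hM : M.PaperLoopless)
    (x : α → ℝ) {B : Set α} (hB : IsOptimalBase M x B) {e : α} (heB : e ∈ B) :
    x e ≤ muWeight M x e := by
  have heE : e ∈ M.E := hB.1.subset_ground heB
  obtain ⟨-, B₀, hB₀, heB₀⟩ := hM e heE
  -- a circuit through `e` is needed, as otherwise `muWeight M x e = sInf ∅ = 0`
  have hC₀ : M.IsCircuit' (M.fundCircuit e B₀) :=
    isCircuit'_iff_isCircuit.2 (hB₀.fundCircuit_isCircuit heE heB₀)
  refine le_csInf ⟨_, _, hC₀, M.mem_fundCircuit e B₀, rfl⟩ ?_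
  rintro w ⟨C, hC, heC, rfl⟩
  exact hB.le_sSup_image_of_isCircuit heB (isCircuit'_iff_isCircuit.1 hC) heC
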